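/- Let R = ℂ[x₀,…,x₅]/(x₀²,…,x₅²), let ζ ≠ ζ′ be complex numbers with ζ³ = ζ′³ = −1, and set p_ζ = (x₀ + ζx₁)(x₂ + ζx₃)(x₄ + ζx₅) and p_ζ′ = (x₀ + ζ′x₁)(x₂ + ζ′x₃)(x₄ + ζ′x₅) in R. If y ∈ R is the image of a homogeneous linear form and y·p_ζ = 0 and y·p_ζ′ = 0 in R, then y = 0. -/

import Mathlib

open MvPolynomial

noncomputable section

/-- The Jacobian ideal of the Fermat cubic fourfold `x₀³ + ⋯ + x₅³`,
generated by the squares of the six variables. -/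
def fermatJacIdeal : Ideal (MvPolynomial (Fin 6) ℂ) :=
  Ideal.span (Set.range fun i : Fin 6 => (X i : MvPolynomial (Fin 6) ℂ) ^ 2)

/-- The Jacobian ring `R = ℂ[x₀,…,x₅]/(x₀²,…,x₅²)` of the Fermat cubic fourfold. -/
abbrev FermatJacRing := MvPolynomial (Fin 6) ℂ ⧸ fermatJacIdeal

/-- The quotient map `ℂ[x₀,…,x₅] → R`. -/
def fermatπ : MvPolynomial (Fin 6) ℂ →ₐ[ℂ] FermatJacRing :=
  Ideal.Quotient.mkₐ ℂ fermatJacIdeal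

/-- The degree-`d` graded component of `R`. -/
def fermatDeg (d : ℕ) : Submodule ℂ FermatJacRing :=
  (homogeneousSubmodule (Fin 6) ℂ d).map fermatπ.toLinearMap

/-- The class `p_ζ = (x₀+ζx₁)(x₂+ζx₃)(x₄+ζx₅)` in `R`. -/
def fermatPlaneClass (ζ : ℂ) : FermatJacRing :=
  fermatπ ((X 0 + C ζ * X 1) * (X 2 + C ζ * X 3) * (X 4 + C ζ * X 5))

/-!
Write `y = ∑ aᵢ xᵢ`. Since every `xᵢ² = 0` in `R`, multiplying `y · p_ζ` by `x₃ x₅` kills every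
term except `(a₁ + ζ a₀) · x₀x₁x₂x₃x₄x₅`, and likewise for the other two pairs of variables.
The squarefree monomial `x₀⋯x₅` does not lie in the monomial ideal `(xᵢ²)`, so it is nonzero in
`R`; hence `a₁ + ζ a₀ = a₃ + ζ a₂ = a₅ + ζ a₄ = 0`. The same relations for `ζ' ≠ ζ` force all
`aᵢ = 0`.
-/

section SquareZero

variable {A : Type*} [CommRing A] {u v : A}

theorem add_mul_mul_self_of_sq_eq_zero (hv : v ^ 2 = 0) (ζ : A) : (u + ζ * v) * v = u * v := by
  linear_combination ζ * hv

theorem add_mul_mul_mul_eq_zero_of_sq_eq_zero (hu : u ^ 2 = 0) (hv : v ^ 2 = 0) (a b : A) :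
    (a * u + b * v) * (u * v) = 0 := by
  linear_combination (a * v) * hu + (b * u) * hv

theorem add_mul_mul_add_mul_of_sq_eq_zero (hu : u ^ 2 = 0) (hv : v ^ 2 = 0) (a b ζ : A) :
    (a * u + b * v) * (u + ζ * v) = (b + ζ * a) * (u * v) := by
  linear_combination a * hu + (b * ζ) * hv

theorem linear_mul_plane_mul_eq {u₀ v₀ u₁ v₁ u₂ v₂ : A} (hu₀ : u₀ ^ 2 = 0) (hv₀ : v₀ ^ 2 = 0)
    (hu₁ : u₁ ^ 2 = 0) (hv₁ : v₁ ^ 2 = 0) (hu₂ : u₂ ^ 2 = 0) (hv₂ : v₂ ^ 2 = 0)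
    (a₀ b₀ a₁ b₁ a₂ b₂ ζ : A) :
    ((a₀ * u₀ + b₀ * v₀) + (a₁ * u₁ + b₁ * v₁) + (a₂ * u₂ + b₂ * v₂)) *
        ((u₀ + ζ * v₀) * (u₁ + ζ * v₁) * (u₂ + ζ * v₂)) * (v₁ * v₂) =
      (b₀ + ζ * a₀) * (u₀ * v₀ * (u₁ * v₁) * (u₂ * v₂)) := by
  set ℓ₀ := a₀ * u₀ + b₀ * v₀
  set ℓ₁ := a₁ * u₁ + b₁ * v₁
  set ℓ₂ := a₂ * u₂ + b₂ * v₂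
  calc (ℓ₀ + ℓ₁ + ℓ₂) * ((u₀ + ζ * v₀) * (u₁ + ζ * v₁) * (u₂ + ζ * v₂)) * (v₁ * v₂)
      = (ℓ₀ + ℓ₁ + ℓ₂) * (u₀ + ζ * v₀) * ((u₁ + ζ * v₁) * v₁) * ((u₂ + ζ * v₂) * v₂) := by ring
    _ = ℓ₀ * (u₀ + ζ * v₀) * (u₁ * v₁) * (u₂ * v₂) + (u₀ + ζ * v₀) * (u₂ * v₂) * (ℓ₁ * (u₁ * v₁))
          + (u₀ + ζ * v₀) * (u₁ * v₁) * (ℓ₂ * (u₂ * v₂)) := by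
      rw [add_mul_mul_self_of_sq_eq_zero hv₁, add_mul_mul_self_of_sq_eq_zero hv₂]; ring
    _ = (b₀ + ζ * a₀) * (u₀ * v₀ * (u₁ * v₁) * (u₂ * v₂)) := by
      rw [add_mul_mul_mul_eq_zero_of_sq_eq_zero hu₁ hv₁,
        add_mul_mul_mul_eq_zero_of_sq_eq_zero hu₂ hv₂, add_mul_mul_add_mul_of_sq_eq_zero hu₀ hv₀]
      ring

end SquareZero

theorem prod_X_notMem_span_X_sq {σ R : Type*} [CommSemiring R] [Nontrivial R] (s : Finset σ) :
    ∏ i ∈ s, (X i : MvPolynomial σ R) ∉ Ideal.span (Set.range fun i => X i ^ 2) := by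
  classical
  have hrange : Set.range (fun i => (X i : MvPolynomial σ R) ^ 2) =
      (fun m => monomial m (1 : R)) '' Set.range fun i => Finsupp.single i 2 := by
    rw [← Set.range_comp]; simp only [X_pow_eq_monomial, Function.comp_def]
  have hprod : ∏ i ∈ s, (X i : MvPolynomial σ R) = monomial (∑ i ∈ s, Finsupp.single i 1) 1 := by
    rw [monomial_sum_one]; rfl
  rw [hrange, hprod, mem_ideal_span_monomial_image, support_monomial, if_neg one_ne_zero]
  simp only [Finset.mem_singleton, forall_eq, Set.mem_range, exists_exists_eq_and, not_exists]
  intro i hle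
  have := hle i
  simp only [Finsupp.single_eq_same, Finsupp.finsetSum_apply, Finsupp.single_apply,
    Finset.sum_ite_eq'] at this
  split_ifs at this <;> omega

theorem fermatDeg_one_eq_span :
    fermatDeg 1 = Submodule.span ℂ (Set.range fun i => fermatπ (X i)) := by
  rw [fermatDeg, homogeneousSubmodule_one_eq_span_X, Submodule.map_span, ← Set.range_comp]
  rfl

theorem fermatπ_X_sq (i : Fin 6) : fermatπ (X i) ^ 2 = 0 := by
  rw [← map_pow, fermatπ, Ideal.Quotient.mkₐ_eq_mk, Ideal.Quotient.eq_zero_iff_mem]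
  exact Ideal.subset_span ⟨i, rfl⟩

theorem fermatπ_prod_X_ne_zero : ∏ i, fermatπ (X i) ≠ 0 := by
  rw [← map_prod, fermatπ, Ideal.Quotient.mkₐ_eq_mk, Ne, Ideal.Quotient.eq_zero_iff_mem]
  exact prod_X_notMem_span_X_sq _

theorem eq_zero_and_eq_zero_of_add_mul_eq_zero {K : Type*} [CommRing K] [NoZeroDivisors K]
    {ζ ζ' a b : K} (hne : ζ ≠ ζ') (h : b + ζ * a = 0) (h' : b + ζ' * a = 0) : a = 0 ∧ b = 0 := by
  have ha : a = 0 := by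
    have : (ζ - ζ') * a = 0 := by linear_combination h - h'
    exact (mul_eq_zero.mp this).resolve_left (sub_ne_zero.mpr hne)
  exact ⟨ha, by simpa [ha] using h⟩

theorem coeff_relations_of_linear_mul_fermatPlaneClass_eq_zero (a : Fin 6 → ℂ) (ζ : ℂ)
    (h : (∑ i, a i • fermatπ (X i)) * fermatPlaneClass ζ = 0) :
    a 1 + ζ * a 0 = 0 ∧ a 3 + ζ * a 2 = 0 ∧ a 5 + ζ * a 4 = 0 := by
  set x : Fin 6 → FermatJacRing := fun i => fermatπ (X i)
  set c := algebraMap ℂ FermatJacRing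
  have hℓ : ∑ i, a i • x i = (c (a 0) * x 0 + c (a 1) * x 1) + (c (a 2) * x 2 + c (a 3) * x 3)
      + (c (a 4) * x 4 + c (a 5) * x 5) := by
    have hsmul : ∀ (r : ℂ) (z : FermatJacRing), r • z = c r * z :=
      fun r z => Algebra.smul_def r z
    simp only [Fin.sum_univ_six, hsmul]
    ring
  have hp : fermatPlaneClass ζ = (x 0 + c ζ * x 1) * (x 2 + c ζ * x 3) * (x 4 + c ζ * x 5) := by
    simp only [fermatPlaneClass, map_mul, map_add, algHom_C, x, c]
  have htop : ∀ b : ℂ, c b * (x 0 * x 1 * (x 2 * x 3) * (x 4 * x 5)) = 0 → b = 0 := by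
    intro b hb
    rw [← Algebra.smul_def, smul_eq_zero] at hb
    refine hb.resolve_right ?_
    simpa only [Fin.prod_univ_six, mul_assoc] using fermatπ_prod_X_ne_zero
  have hx := fermatπ_X_sq
  rw [hℓ, hp] at h
  refine ⟨htop _ ?_, htop _ ?_, htop _ ?_⟩ <;> rw [map_add, map_mul]
  · linear_combination (x 3 * x 5) * h - linear_mul_plane_mul_eq (hx 0) (hx 1) (hx 2) (hx 3)
      (hx 4) (hx 5) (c (a 0)) (c (a 1)) (c (a 2)) (c (a 3)) (c (a 4)) (c (a 5)) (c ζ)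
  · linear_combination (x 1 * x 5) * h - linear_mul_plane_mul_eq (hx 2) (hx 3) (hx 0) (hx 1)
      (hx 4) (hx 5) (c (a 2)) (c (a 3)) (c (a 0)) (c (a 1)) (c (a 4)) (c (a 5)) (c ζ)
  · linear_combination (x 1 * x 3) * h - linear_mul_plane_mul_eq (hx 4) (hx 5) (hx 0) (hx 1)
      (hx 2) (hx 3) (c (a 4)) (c (a 5)) (c (a 0)) (c (a 1)) (c (a 2)) (c (a 3)) (c ζ)

theorem fermat_linear_annihilating_both_planes_is_zero
    (ζ ζ' : ℂ) (hne : ζ ≠ ζ')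
    (y : FermatJacRing) (hy : y ∈ fermatDeg 1)
    (h1 : y * fermatPlaneClass ζ = 0) (h2 : y * fermatPlaneClass ζ' = 0) :
    y = 0 := by
  rw [fermatDeg_one_eq_span, Submodule.mem_span_range_iff_exists_fun] at hy
  obtain ⟨a, rfl⟩ := hy
  obtain ⟨e₁, e₂, e₃⟩ := coeff_relations_of_linear_mul_fermatPlaneClass_eq_zero a ζ h1
  obtain ⟨e₁', e₂', e₃'⟩ := coeff_relations_of_linear_mul_fermatPlaneClass_eq_zero a ζ' h2
  obtain ⟨ha₀, ha₁⟩ := eq_zero_and_eq_zero_of_add_mul_eq_zero hne e₁ e₁'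
  obtain ⟨ha₂, ha₃⟩ := eq_zero_and_eq_zero_of_add_mul_eq_zero hne e₂ e₂'
  obtain ⟨ha₄, ha₅⟩ := eq_zero_and_eq_zero_of_add_mul_eq_zero hne e₃ e₃'
  have ha : a = 0 := by
    funext i
    fin_cases i <;> assumption
  simp [ha]
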